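/- Let I be a real-valued function on real populations that is scale-invariant (I(tP) = I(P) for every real t > 0 and every real population P), and let J be a real-valued function on real populations that is additive and positively homogeneous (J(P + Q) = J(P) + J(Q) and J(tP) = tJ(P) for t > 0). Let D be a real population with |D| = 1, and assume that for every real population Q, (I(D + tQ) − I(D))/t → J(Q) as t → 0⁺. Let Z₀ be a population with Z₀ = |Z₀|·D. Define V(X) = Avg(X) − I(X) on populations, and define f(w) = w − J(1_w) − Avg(D), where 1_w is the population with a single welfare subject at level w. Then for all populations X and Y with Σ_w X(w)·f(w) > Σ_w Y(w)·f(w), there exists N ∈ ℕ such that V(X + n·Z₀) > V(Y + n·Z₀) for every integer n ≥ N. -/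

import Mathlib

/-- The size of a population: total number of welfare subjects. -/
noncomputable def psize (X : ℝ →₀ ℕ) : ℕ := X.sum fun _ n => n

/-- Total welfare of a population. -/
noncomputable def ptot (X : ℝ →₀ ℕ) : ℝ := X.sum fun w n => (n : ℝ) * w

/-- Average welfare of a population. -/
noncomputable def pavg (X : ℝ →₀ ℕ) : ℝ := ptot X / (psize X : ℝ)

/-- A real population: finitely supported, nonzero, with non-negative real values. -/
def IsRealPop (P : ℝ →₀ ℝ) : Prop := P ≠ 0 ∧ ∀ w, 0 ≤ P w

/-- View an (integer) population as a real population. -/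
noncomputable def toRealPop (X : ℝ →₀ ℕ) : ℝ →₀ ℝ :=
  Finsupp.mapRange (fun n : ℕ => (n : ℝ)) (by simp) X

/-- Size of a real population. -/
noncomputable def rsize (P : ℝ →₀ ℝ) : ℝ := P.sum fun _ x => x

/-- Total welfare of a real population. -/
noncomputable def rtot (P : ℝ →₀ ℝ) : ℝ := P.sum fun w x => x * w

/-- Average welfare of a real population. -/
noncomputable def ravg (P : ℝ →₀ ℝ) : ℝ := rtot P / rsize P


/-!
Put `c = n·|Z₀|`. As a real population `X + n·Z₀` is `X + c·D = c·(D + c⁻¹·X)`, so scale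
invariance of `I` and the directional derivative of `I` at `D` give
`c·(V(X + n·Z₀) − (Avg D − I D)) → Tot X − |X|·Avg D − J(X) = Σ_w X(w)·f(w)` as `n → ∞`,
the last equality because `J` is linear on populations. Comparing these limits for `X` and `Y`
shows that `V(X + n·Z₀) − V(Y + n·Z₀)` is eventually positive.
-/

open Filter Topology

lemma toRealPop_apply (X : ℝ →₀ ℕ) (w : ℝ) : toRealPop X w = X w :=
  Finsupp.mapRange_apply

lemma toRealPop_add (X Y : ℝ →₀ ℕ) : toRealPop (X + Y) = toRealPop X + toRealPop Y := by
  ext w; simp [toRealPop_apply]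

lemma toRealPop_nsmul (n : ℕ) (X : ℝ →₀ ℕ) : toRealPop (n • X) = (n : ℝ) • toRealPop X := by
  ext w; simp [toRealPop_apply]

lemma isRealPop_toRealPop {X : ℝ →₀ ℕ} (hX : X ≠ 0) : IsRealPop (toRealPop X) := by
  refine ⟨fun h => hX ?_, fun w => by simp [toRealPop_apply]⟩
  ext w
  simpa [toRealPop_apply] using DFunLike.congr_fun h w

lemma IsRealPop.add {P Q : ℝ →₀ ℝ} (hP : IsRealPop P) (hQ : IsRealPop Q) :
    IsRealPop (P + Q) := by
  refine ⟨fun h => hP.1 ?_, fun w => add_nonneg (hP.2 w) (hQ.2 w)⟩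
  ext w
  have hw : P w + Q w = 0 := DFunLike.congr_fun h w
  rw [Finsupp.zero_apply]
  exact le_antisymm (by linarith [hQ.2 w]) (hP.2 w)

lemma IsRealPop.smul {P : ℝ →₀ ℝ} (hP : IsRealPop P) {t : ℝ} (ht : 0 < t) :
    IsRealPop (t • P) :=
  ⟨smul_ne_zero ht.ne' hP.1, fun w => mul_nonneg ht.le (hP.2 w)⟩

lemma isRealPop_single {w t : ℝ} (ht : 0 < t) : IsRealPop (Finsupp.single w t) :=
  ⟨Finsupp.single_ne_zero.2 ht.ne', fun v => by
    rw [Finsupp.single_apply]; split_ifs <;> simp [ht.le]⟩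

lemma rtot_add (P Q : ℝ →₀ ℝ) : rtot (P + Q) = rtot P + rtot Q :=
  Finsupp.sum_add_index' (fun _ => zero_mul _) (fun w a b => add_mul a b w)

lemma rsize_add (P Q : ℝ →₀ ℝ) : rsize (P + Q) = rsize P + rsize Q :=
  Finsupp.sum_add_index' (fun _ => rfl) (fun _ _ _ => rfl)

lemma rtot_smul (c : ℝ) (P : ℝ →₀ ℝ) : rtot (c • P) = c * rtot P := by
  rw [rtot, rtot, Finsupp.sum_smul_index fun w => zero_mul w, Finsupp.mul_sum]
  simp only [mul_assoc]

lemma rsize_smul (c : ℝ) (P : ℝ →₀ ℝ) : rsize (c • P) = c * rsize P := by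
  rw [rsize, rsize, Finsupp.sum_smul_index fun _ => rfl, Finsupp.mul_sum]

lemma ravg_add_smul {D : ℝ →₀ ℝ} (hDsize : rsize D = 1) (P : ℝ →₀ ℝ) (c : ℝ) :
    ravg (P + c • D) = (rtot P + c * ravg D) / (rsize P + c) := by
  simp [ravg, rtot_add, rsize_add, rtot_smul, rsize_smul, hDsize]

lemma pavg_eq_ravg (X : ℝ →₀ ℕ) : pavg X = ravg (toRealPop X) := by
  have htot : rtot (toRealPop X) = ptot X :=
    Finsupp.sum_mapRange_index fun _ => zero_mul _
  have hsize : rsize (toRealPop X) = psize X := by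
    rw [rsize, toRealPop, Finsupp.sum_mapRange_index fun _ => rfl, psize, Finsupp.sum,
      Finsupp.sum, Nat.cast_sum]
  rw [pavg, ravg, htot, hsize]

lemma psize_pos {X : ℝ →₀ ℕ} (hX : X ≠ 0) : 0 < psize X := by
  obtain ⟨w, hw⟩ := Finsupp.ne_iff.mp hX
  exact Finset.sum_pos' (fun _ _ => Nat.zero_le _)
    ⟨w, Finsupp.mem_support_iff.mpr hw, Nat.pos_of_ne_zero hw⟩

lemma tendsto_mul_div_add_atTop (a s : ℝ) :
    Tendsto (fun c : ℝ => c * a / (s + c)) atTop (𝓝 a) := by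
  have hden : Tendsto (fun c : ℝ => s + c) atTop atTop :=
    tendsto_atTop_add_const_left _ _ tendsto_id
  have h : Tendsto (fun c : ℝ => a - s * a / (s + c)) atTop (𝓝 (a - 0)) :=
    tendsto_const_nhds.sub (tendsto_const_nhds.div_atTop hden)
  rw [sub_zero] at h
  refine h.congr' ?_
  filter_upwards [hden.eventually_gt_atTop 0] with c hc
  field_simp
  ring

section Additive

variable {J : (ℝ →₀ ℝ) → ℝ}
  (hJadd : ∀ P Q : ℝ →₀ ℝ, IsRealPop P → IsRealPop Q → J (P + Q) = J P + J Q)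
  (hJhom : ∀ t : ℝ, t > 0 → ∀ P : ℝ →₀ ℝ, IsRealPop P → J (t • P) = t * J P)
include hJadd hJhom

lemma eq_sum_single_of_additive {P : ℝ →₀ ℝ} (hP : IsRealPop P) :
    J P = P.sum fun w x => x * J (Finsupp.single w 1) := by
  induction P using Finsupp.induction with
  | zero => exact absurd rfl hP.1
  | single_add a b g ha hb ih =>
    have hga : g a = 0 := Finsupp.notMem_support_iff.mp ha
    have hb_pos : 0 < b := by
      have := hP.2 a
      simp only [Finsupp.add_apply, Finsupp.single_eq_same, hga, add_zero] at this
      exact this.lt_of_ne' hb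
    have hJsingle : J (Finsupp.single a b) = b * J (Finsupp.single a 1) := by
      rw [← Finsupp.smul_single_one, hJhom b hb_pos _ (isRealPop_single one_pos)]
    rw [Finsupp.sum_add_index' (fun _ => zero_mul _) (fun _ _ _ => add_mul _ _ _),
      Finsupp.sum_single_index (zero_mul _)]
    by_cases hg : g = 0
    · simp [hg, hJsingle]
    have hg_nonneg : ∀ w, 0 ≤ g w := by
      intro w
      rcases eq_or_ne a w with rfl | hw
      · exact hga.ge
      · simpa [Finsupp.single_apply, hw] using hP.2 w
    rw [hJadd _ _ (isRealPop_single hb_pos) ⟨hg, hg_nonneg⟩, hJsingle, ih ⟨hg, hg_nonneg⟩]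

lemma sum_mul_sub_eq {P : ℝ →₀ ℝ} (hP : IsRealPop P) (A : ℝ) :
    (P.sum fun w x => x * (w - J (Finsupp.single w 1) - A)) = rtot P - rsize P * A - J P := by
  rw [eq_sum_single_of_additive hJadd hJhom hP]
  simp only [rtot, rsize, Finsupp.sum, mul_sub, Finset.sum_sub_distrib, Finset.sum_mul]
  ring

end Additive

lemma tendsto_mul_ravg_add_smul_sub {D : ℝ →₀ ℝ} (hDsize : rsize D = 1) (P : ℝ →₀ ℝ) :
    Tendsto (fun c => c * (ravg (P + c • D) - ravg D)) atTop
      (𝓝 (rtot P - rsize P * ravg D)) := by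
  refine (tendsto_mul_div_add_atTop _ (rsize P)).congr' ?_
  filter_upwards [eventually_gt_atTop (-rsize P)] with c hc
  have hc' : rsize P + c ≠ 0 := by linarith
  rw [ravg_add_smul hDsize]
  field_simp
  ring

section ScaleInvariant

variable {I J : (ℝ →₀ ℝ) → ℝ} {D : ℝ →₀ ℝ}
  (hIscale : ∀ t : ℝ, t > 0 → ∀ P : ℝ →₀ ℝ, IsRealPop P → I (t • P) = I P)
  (hderiv : ∀ Q : ℝ →₀ ℝ, IsRealPop Q →
    Tendsto (fun t : ℝ => (I (D + t • Q) - I D) / t) (𝓝[>] 0) (𝓝 (J Q)))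
  (hD : IsRealPop D)
include hIscale hderiv hD

lemma tendsto_mul_I_add_smul_sub {P : ℝ →₀ ℝ} (hP : IsRealPop P) :
    Tendsto (fun c => c * (I (P + c • D) - I D)) atTop (𝓝 (J P)) := by
  refine ((hderiv P hP).comp tendsto_inv_atTop_nhdsGT_zero).congr' ?_
  filter_upwards [eventually_gt_atTop 0] with c hc
  have hscale : P + c • D = c • (D + c⁻¹ • P) := by
    rw [smul_add, smul_smul, mul_inv_cancel₀ hc.ne', one_smul, add_comm]
  rw [Function.comp_apply, hscale, hIscale c hc _ (hD.add (hP.smul (inv_pos.2 hc))),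
    div_inv_eq_mul, mul_comm]

lemma tendsto_mul_ravg_sub_I_add_smul (hDsize : rsize D = 1) {P : ℝ →₀ ℝ} (hP : IsRealPop P) :
    Tendsto (fun c => c * ((ravg (P + c • D) - I (P + c • D)) - (ravg D - I D))) atTop
      (𝓝 (rtot P - rsize P * ravg D - J P)) := by
  refine ((tendsto_mul_ravg_add_smul_sub hDsize P).sub
    (tendsto_mul_I_add_smul_sub hIscale hderiv hD hP)).congr fun c => ?_
  ring

end ScaleInvariant

theorem stmt_9 (I J : (ℝ →₀ ℝ) → ℝ)
    (hIscale : ∀ t : ℝ, t > 0 → ∀ P : ℝ →₀ ℝ, IsRealPop P → I (t • P) = I P)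
    (hJadd : ∀ P Q : ℝ →₀ ℝ, IsRealPop P → IsRealPop Q → J (P + Q) = J P + J Q)
    (hJhom : ∀ t : ℝ, t > 0 → ∀ P : ℝ →₀ ℝ, IsRealPop P → J (t • P) = t * J P)
    (D : ℝ →₀ ℝ) (hD : IsRealPop D) (hDsize : rsize D = 1)
    (hderiv : ∀ Q : ℝ →₀ ℝ, IsRealPop Q →
      Filter.Tendsto (fun t : ℝ => (I (D + t • Q) - I D) / t)
        (nhdsWithin 0 (Set.Ioi 0)) (nhds (J Q)))
    (Z₀ : ℝ →₀ ℕ) (hZ₀ : Z₀ ≠ 0) (hZ₀D : toRealPop Z₀ = (psize Z₀ : ℝ) • D)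
    (V : (ℝ →₀ ℕ) → ℝ)
    (hV : ∀ X : ℝ →₀ ℕ, V X = pavg X - I (toRealPop X))
    (f : ℝ → ℝ)
    (hf : ∀ w : ℝ, f w = w - J (Finsupp.single w (1 : ℝ)) - ravg D)
    (X Y : ℝ →₀ ℕ) (hX : X ≠ 0) (hY : Y ≠ 0)
    (hfsum : X.sum (fun w n => (n : ℝ) * f w) > Y.sum (fun w n => (n : ℝ) * f w)) :
    ∃ N : ℕ, ∀ n : ℕ, n ≥ N → V (X + n • Z₀) > V (Y + n • Z₀) := by
  have hk : (0 : ℝ) < psize Z₀ := Nat.cast_pos.2 (psize_pos hZ₀)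
  have hlim : ∀ W : ℝ →₀ ℕ, W ≠ 0 →
      Tendsto (fun n : ℕ => n * psize Z₀ * (V (W + n • Z₀) - (ravg D - I D))) atTop
        (𝓝 (W.sum fun w m => (m : ℝ) * f w)) := by
    intro W hW
    have hW' := isRealPop_toRealPop hW
    have hsum : (W.sum fun w m => (m : ℝ) * f w) =
        rtot (toRealPop W) - rsize (toRealPop W) * ravg D - J (toRealPop W) := by
      rw [← sum_mul_sub_eq hJadd hJhom hW', toRealPop,
        Finsupp.sum_mapRange_index fun _ => zero_mul _]
      simp only [hf]
    rw [hsum]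
    refine ((tendsto_mul_ravg_sub_I_add_smul hIscale hderiv hD hDsize hW').comp
      (tendsto_natCast_atTop_atTop.atTop_mul_const hk)).congr fun n => ?_
    simp only [Function.comp_apply, hV, pavg_eq_ravg, toRealPop_add, toRealPop_nsmul, hZ₀D,
      smul_smul]
  obtain ⟨N, hN⟩ := ((((hlim X hX).sub (hlim Y hY)).eventually
    (eventually_gt_nhds (sub_pos.2 hfsum))).and (eventually_gt_atTop 0)).exists_forall_of_atTop
  refine ⟨N, fun n hn => ?_⟩
  obtain ⟨hdiff, hn_pos⟩ := hN n hn
  rw [← mul_sub, sub_sub_sub_cancel_right] at hdiff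
  exact sub_pos.1 (pos_of_mul_pos_right hdiff (by positivity))
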